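/- Let G be a finite simple graph with maximum degree Δ and let c be a Grundy coloring of G. Then for every vertex v and every color j, the coloring obtained from c by the Kempe chain operation (v,j) has at most one more Δ-colored vertex than c has; the same holds for the coloring obtained from c by any color elimination. -/

import Mathlib

set_option linter.unusedSectionVars false

open scoped ENNReal

attribute [local instance] Classical.propDecidable

noncomputable section

namespace DGC

/-! ### Markov chains and expected hitting times -/

/-- `survive K A t s` is the probability that the Markov chain with transition kernel `K`,
started at `s`, has not visited the set `A` within its first `t` steps
(time `0` counts: if `s ∈ A` the chain has hit `A` at time `0`). -/
def survive {S : Type*} (K : S → PMF S) (A : Set S) : ℕ → S → ℝ≥0∞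
  | 0, s => if s ∈ A then 0 else 1
  | (t + 1), s => if s ∈ A then 0 else ∑' s', K s s' * survive K A t s'

/-- The expected hitting time of the set `A` for the Markov chain with kernel `K`
started at `s`; it equals `∑_{t ≥ 0} Pr[T > t]` where `T = min {t : X_t ∈ A}`, and it is `∞`
if `A` is reached with probability less than one. -/
def expectedHitting {S : Type*} (K : S → PMF S) (A : Set S) (s : S) : ℝ≥0∞ :=
  ∑' t, survive K A t s

/-- `log⁺ T = max {1, ln T}`. -/
def logPlus (T : ℕ) : ℝ := max 1 (Real.log T)

variable {V : Type*} [Fintype V] [DecidableEq V]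

/-! ### Colorings, conflicts -/

/-- A coloring (a map `V → ℕ`, colors being `1,2,3,…`) is proper if no edge is monochromatic. -/
def IsProper (G : SimpleGraph V) (c : V → ℕ) : Prop :=
  ∀ u v, G.Adj u v → c u ≠ c v

/-- The set of conflicting edges of the coloring `c`. -/
def conflictSet (G : SimpleGraph V) (c : V → ℕ) : Set (Sym2 V) :=
  {e | e ∈ G.edgeSet ∧ ∃ u v, e = s(u, v) ∧ c u = c v}

/-- The number of conflicting edges of the coloring `c`. -/
def numConflicts (G : SimpleGraph V) (c : V → ℕ) : ℕ :=
  (conflictSet G c).ncard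

/-- The set of proper 2-colorings (with color set `{1,2}`). -/
def properTwoColorings (G : SimpleGraph V) : Set (V → ℕ) :=
  {c | IsProper G c ∧ ∀ v, c v = 1 ∨ c v = 2}

/-- Vertices that are an endpoint of some conflicting edge. -/
def conflictVerts (G : SimpleGraph V) (c : V → ℕ) : Finset V :=
  Finset.univ.filter fun v => ∃ u, G.Adj v u ∧ c v = c u

/-! ### RLS and the (1+1) EA with `k = 2` colors (palette `{1,2}`) -/

/-- Recolor vertex `v` with the unique other color of the palette `{1,2}`. -/
def flip (c : V → ℕ) (v : V) : V → ℕ := Function.update c v (3 - c v)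

/-- One iteration of RLS with `k = 2` colors: choose a vertex `v` uniformly at random,
recolor it with the other color, and accept iff the number of conflicting edges
does not increase. -/
def rls2 (G : SimpleGraph V) (c : V → ℕ) : PMF (V → ℕ) :=
  if h : Nonempty V then
    (@PMF.uniformOfFintype V _ h).map fun v =>
      if numConflicts G (flip c v) ≤ numConflicts G c then flip c v else c
  else PMF.pure c

/-- Independent Bernoulli choices along a list of vertices. -/
def flipsAux (p : V → ℝ≥0∞) (h : ∀ v, p v ≤ 1) : List V → PMF (V → Bool)
  | [] => PMF.pure fun _ => false
  | v :: vs =>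
      (PMF.bernoulli (p v).toNNReal
        (by simpa using ENNReal.toNNReal_mono ENNReal.one_ne_top (h v))).bind fun b =>
        (flipsAux p h vs).map fun g => Function.update g v b

/-- A random subset of the vertices (as an indicator function), where each vertex `v` is
included independently with probability `p v`. -/
def flips (p : V → ℝ≥0∞) (h : ∀ v, p v ≤ 1) : PMF (V → Bool) :=
  flipsAux p h Finset.univ.toList

/-- `1/|V|` (or `0` for the empty graph). -/
def invCard (V : Type*) [Fintype V] : ℝ≥0∞ :=
  if 0 < Fintype.card V then (Fintype.card V : ℝ≥0∞)⁻¹ else 0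

lemma invCard_le_one : invCard V ≤ 1 := by
  unfold invCard
  split
  · rw [ENNReal.inv_le_one]
    exact_mod_cast ‹0 < Fintype.card V›
  · exact zero_le_one

lemma half_le_one : (1 / 2 : ℝ≥0∞) ≤ 1 := by
  rw [ENNReal.div_le_iff (by norm_num) (by norm_num)]
  norm_num

/-- Recolor (within the palette `{1,2}`) exactly the vertices selected by `bs`. -/
def mutate2 (c : V → ℕ) (bs : V → Bool) : V → ℕ := fun v => if bs v then 3 - c v else c v

/-- One iteration of the (1+1) EA with `k = 2` colors: every vertex is independently
recolored with probability `1/n`, and the offspring is accepted iff its number of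
conflicting edges is not larger. -/
def ea2 (G : SimpleGraph V) (c : V → ℕ) : PMF (V → ℕ) :=
  (flips (fun _ => invCard V) (fun _ => invCard_le_one)).map fun bs =>
    if numConflicts G (mutate2 c bs) ≤ numConflicts G c then mutate2 c bs else c

/-- One iteration of the tailored (1+1) EA with `k = 2` colors: every endpoint of a
conflicting edge is independently recolored with probability `1/2`, every other vertex with
probability `1/n`; the offspring is accepted iff its number of conflicting edges is
not larger. -/
def tailoredEA2 (G : SimpleGraph V) (c : V → ℕ) : PMF (V → ℕ) :=
  (flips (fun v => if v ∈ conflictVerts G c then 1 / 2 else invCard V)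
      (fun v => by (try dsimp only); split; exacts [half_le_one, invCard_le_one])).map fun bs =>
    if numConflicts G (mutate2 c bs) ≤ numConflicts G c then mutate2 c bs else c

/-- One iteration of the tailored RLS with `k = 2` colors: with probability `1/2` a vertex is
chosen uniformly at random among the endpoints of conflicting edges (if any exist), otherwise
uniformly at random among all vertices; it is recolored with the other color, and the move
is accepted iff the number of conflicting edges does not increase. -/
def tailoredRls2 (G : SimpleGraph V) (c : V → ℕ) : PMF (V → ℕ) :=
  if hV : Nonempty V then
    (PMF.bernoulli (1 / 2) (by norm_num)).bind fun coin =>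
      (if h : coin = true ∧ (conflictVerts G c).Nonempty
        then PMF.uniformOfFinset (conflictVerts G c) h.2
        else @PMF.uniformOfFintype V _ hV).map fun v =>
        if numConflicts G (flip c v) ≤ numConflicts G c then flip c v else c
  else PMF.pure c

/-! ### Grundy colorings and Grundy local search -/

/-- The smallest color (from `{1,2,3,…}`) not used by any neighbor of `v`. -/
def smallestFree (G : SimpleGraph V) (c : V → ℕ) (v : V) : ℕ :=
  sInf {i | 1 ≤ i ∧ ∀ u, G.Adj v u → c u ≠ i}

/-- A coloring is a Grundy coloring iff every vertex has the smallest color not used by any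
of its neighbors (equivalently: it is proper, and every vertex `v` has, for every color
`i < c v`, an `i`-colored neighbor). -/
def IsGrundy (G : SimpleGraph V) (c : V → ℕ) : Prop :=
  ∀ v, c v = smallestFree G c v

/-- One step of Grundy local search: some vertex whose color is not the smallest color absent
from its neighborhood is recolored with the smallest color not used by any of its neighbors. -/
def glsStep (G : SimpleGraph V) (c c' : V → ℕ) : Prop :=
  ∃ v, c v ≠ smallestFree G c v ∧ c' = Function.update c v (smallestFree G c v)

/-- `glsRun G c c'` holds iff `c'` is a possible outcome of a (maximal) run of Grundy local
search started at `c`: it is reachable from `c` by Grundy local search steps and is a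
Grundy coloring. -/
def glsRun (G : SimpleGraph V) (c c' : V → ℕ) : Prop :=
  Relation.ReflTransGen (glsStep G) c c' ∧ IsGrundy G c'

/-- The Grundy number of `G`: the largest color used by any Grundy coloring of `G`. -/
def grundyNumber (G : SimpleGraph V) : ℕ :=
  sSup {k | ∃ c v, IsGrundy G c ∧ c v = k}

/-! ### Kempe chains, color eliminations, and iterated local search -/

/-- The restriction of `G` to the vertex set `S` (an induced subgraph on the same
vertex type). -/
def restrict (G : SimpleGraph V) (S : Set V) : SimpleGraph V where
  Adj u w := G.Adj u w ∧ u ∈ S ∧ w ∈ S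
  symm := ⟨fun u w h => ⟨h.1.symm, h.2.2, h.2.1⟩⟩
  loopless := ⟨fun u h => G.irrefl h.1⟩

/-- `H_j(v)`: the connected component containing `v` of the subgraph of `G` induced by the
vertices colored `c v` or `j`. -/
def kempeSet (G : SimpleGraph V) (c : V → ℕ) (v : V) (j : ℕ) : Set V :=
  {u | (restrict G {w | c w = c v ∨ c w = j}).Reachable v u}

/-- The Kempe chain operation `(v, j)`: swap the colors `c v` and `j` on all vertices of
`H_j(v)`. -/
def kempeSwap (G : SimpleGraph V) (c : V → ℕ) (v : V) (j : ℕ) : V → ℕ := fun u =>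
  if u ∈ kempeSet G c v j then
    if c u = c v then j else if c u = j then c v else c u
  else c u

/-- The union `H_j(v₁) ∪ … ∪ H_j(v_ℓ)` over all `i`-colored neighbors `v₁, …, v_ℓ` of `v`. -/
def ceSet (G : SimpleGraph V) (c : V → ℕ) (v : V) (i j : ℕ) : Set V :=
  {u | ∃ w, G.Adj v w ∧ c w = i ∧ (restrict G {x | c x = i ∨ c x = j}).Reachable w u}

/-- The color elimination at `v` with colors `i, j`: swap colors `i` and `j` on
`H_j(v₁) ∪ … ∪ H_j(v_ℓ)`, where `v₁, …, v_ℓ` are the `i`-colored neighbors of `v`. -/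
def ceSwap (G : SimpleGraph V) (c : V → ℕ) (v : V) (i j : ℕ) : V → ℕ := fun u =>
  if u ∈ ceSet G c v i j then
    if c u = i then j else if c u = j then i else c u
  else c u

/-- `n_i(c)`: the number of `i`-colored vertices of the coloring `c`. -/
def colorCount (c : V → ℕ) (i : ℕ) : ℕ := (Finset.univ.filter fun v => c v = i).card

/-- The selection order `x ⪰ y`: `x` has fewer conflicting edges than `y`, or equally many
and the color frequencies satisfy `n_i(x) = n_i(y)` for all `i`, or `n_i(x) < n_i(y)` for the
largest index `i` with `n_i(x) ≠ n_i(y)`. -/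
def Pref (G : SimpleGraph V) (x y : V → ℕ) : Prop :=
  numConflicts G x < numConflicts G y ∨
    (numConflicts G x = numConflicts G y ∧
      ((∀ i, colorCount x i = colorCount y i) ∨
        ∃ i, colorCount x i < colorCount y i ∧ ∀ k, i < k → colorCount x k = colorCount y k))

/-- One iteration of ILS with Kempe chains, where `gls` is the (arbitrary, but fixed) rule
producing the outcome of a run of Grundy local search: choose `v` uniformly at random and
`j ∈ {1, …, deg(v) + 1}` uniformly at random, apply the Kempe chain operation `(v, j)`,
apply Grundy local search, and accept the result `z` iff `z ⪰ x`. -/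
def ilsKempe (G : SimpleGraph V) (gls : (V → ℕ) → (V → ℕ)) (x : V → ℕ) :
    PMF (V → ℕ) :=
  if hV : Nonempty V then
    (@PMF.uniformOfFintype V _ hV).bind fun v =>
      (PMF.uniformOfFinset (Finset.Icc 1 (G.degree v + 1))
          ⟨1, by simp only [Finset.mem_Icc]; omega⟩).map fun j =>
        let z := gls (kempeSwap G x v j)
        if Pref G z x then z else x
  else PMF.pure x

/-- The pairs of distinct colors `i ≠ j` with `i, j ∈ {1, …, c v − 1}`. -/
def cePairs (x : V → ℕ) (v : V) : Finset (ℕ × ℕ) :=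
  ((Finset.Icc 1 (x v - 1)) ×ˢ (Finset.Icc 1 (x v - 1))).filter fun p => p.1 ≠ p.2

lemma cePairs_nonempty {x : V → ℕ} {v : V} (h : 3 ≤ x v) : (cePairs x v).Nonempty :=
  ⟨(1, 2), by simp only [cePairs, Finset.mem_filter, Finset.mem_product, Finset.mem_Icc]; omega⟩

/-- One iteration of ILS with color eliminations, where `gls` is the (arbitrary, but fixed)
rule producing the outcome of a run of Grundy local search: choose `v` uniformly at random;
if `c v ≥ 3`, choose distinct `i, j ∈ {1, …, c v − 1}` uniformly at random and apply the
corresponding color elimination; apply Grundy local search, and accept the result `z`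
iff `z ⪰ x`. -/
def ilsCE (G : SimpleGraph V) (gls : (V → ℕ) → (V → ℕ)) (x : V → ℕ) :
    PMF (V → ℕ) :=
  if hV : Nonempty V then
    (@PMF.uniformOfFintype V _ hV).bind fun v =>
      if h : 3 ≤ x v then
        (PMF.uniformOfFinset (cePairs x v) (cePairs_nonempty h)).map fun p =>
          let z := gls (ceSwap G x v p.1 p.2)
          if Pref G z x then z else x
      else PMF.pure x
  else PMF.pure x



section Stmt4Aux
variable {V : Type*} [Fintype V] [DecidableEq V] {G : SimpleGraph V} {c : V → ℕ}

lemma smallestFree_mem (G : SimpleGraph V) (c : V → ℕ) (v : V) :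
    1 ≤ smallestFree G c v ∧ ∀ u, G.Adj v u → c u ≠ smallestFree G c v := by
  have hne : {i | 1 ≤ i ∧ ∀ u, G.Adj v u → c u ≠ i}.Nonempty := by
    refine ⟨(G.neighborFinset v).sup c + 1, by omega, fun u hu hcu => ?_⟩
    have : c u ≤ (G.neighborFinset v).sup c :=
      Finset.le_sup (by simpa using hu)
    omega
  exact Nat.sInf_mem hne

lemma grundy_pos (hc : IsGrundy G c) (v : V) : 1 ≤ c v := by
  rw [hc v]; exact (smallestFree_mem G c v).1

lemma grundy_proper (hc : IsGrundy G c) {u v : V} (h : G.Adj u v) : c u ≠ c v := by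
  intro he
  exact (smallestFree_mem G c u).2 v h (by rw [← he]; exact hc u)

lemma grundy_exists_nbr (hc : IsGrundy G c) (v : V) {i : ℕ} (h1 : 1 ≤ i) (h2 : i < c v) :
    ∃ u, G.Adj v u ∧ c u = i := by
  by_contra hno
  push_neg at hno
  have hmem : i ∈ {i | 1 ≤ i ∧ ∀ u, G.Adj v u → c u ≠ i} :=
    ⟨h1, fun u hu => hno u hu⟩
  have h3 : smallestFree G c v ≤ i := Nat.sInf_le hmem
  rw [← hc v] at h3
  omega

lemma nbr_color_count (hc : IsGrundy G c) (a : V) (m : ℕ) :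
    ((Finset.Icc 1 (c a - 1)).erase m).card +
      ((G.neighborFinset a).filter fun u => c u = m).card ≤ G.degree a := by
  classical
  set I := (Finset.Icc 1 (c a - 1)).erase m with hI
  have hrep : ∀ i : ℕ, ∃ u, i ∈ I → G.Adj a u ∧ c u = i := by
    intro i
    by_cases hi : i ∈ I
    · simp only [hI, Finset.mem_erase, Finset.mem_Icc] at hi
      obtain ⟨u, hu⟩ := grundy_exists_nbr hc a hi.2.1
        (by have := grundy_pos hc a; omega)
      exact ⟨u, fun _ => hu⟩
    · exact ⟨a, fun h => absurd h hi⟩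
  choose f hf using hrep
  have hinj : Set.InjOn f I := by
    intro x hx y hy hxy
    have h1 := (hf x hx).2
    have h2 := (hf y hy).2
    rw [← h1, ← h2, hxy]
  have hdisj : Disjoint (I.image f) ((G.neighborFinset a).filter fun u => c u = m) := by
    rw [Finset.disjoint_left]
    intro u hu hu2
    simp only [Finset.mem_image] at hu
    obtain ⟨i, hi, rfl⟩ := hu
    simp only [Finset.mem_filter] at hu2
    have : i ≠ m := by simp only [hI, Finset.mem_erase] at hi; exact hi.1
    exact this ((hf i hi).2 ▸ hu2.2)
  have hsub : (I.image f) ∪ ((G.neighborFinset a).filter fun u => c u = m) ⊆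
      G.neighborFinset a := by
    intro u hu
    rcases Finset.mem_union.mp hu with hu | hu
    · simp only [Finset.mem_image] at hu
      obtain ⟨i, hi, rfl⟩ := hu
      simpa using (hf i hi).1
    · exact Finset.filter_subset _ _ hu
  have h1 := Finset.card_le_card hsub
  rw [Finset.card_union_of_disjoint hdisj, Finset.card_image_of_injOn hinj] at h1
  exact h1

lemma mem_of_walk {S : Set V} : ∀ {r u : V}, (restrict G S).Walk r u → r ∈ S → u ∈ S
  | _, _, SimpleGraph.Walk.nil, hr => hr
  | _, _, SimpleGraph.Walk.cons h p, _ => mem_of_walk p h.2.2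

lemma mem_of_reachable {S : Set V} {r u : V} (h : (restrict G S).Reachable r u)
    (hr : r ∈ S) : u ∈ S :=
  h.elim fun w => mem_of_walk w hr


lemma parent_exists {S : Set V} {r u : V} (hru : (restrict G S).Reachable r u)
    (hur : u ≠ r) : ∃ p, (restrict G S).Adj p u ∧ (restrict G S).Reachable r p ∧
      (restrict G S).dist r p + 1 = (restrict G S).dist r u := by
  set G' := restrict G S
  obtain ⟨w, hw⟩ := hru.exists_walk_length_eq_dist
  obtain ⟨x, hadj, q, hq⟩ := SimpleGraph.Walk.exists_eq_cons_of_ne (Ne.symm hur).symm w.reverse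
  refine ⟨x, hadj.symm, ⟨q.reverse⟩, ?_⟩
  have h1 : G'.dist r x ≤ q.length := by
    have := SimpleGraph.dist_le q.reverse
    simpa using this
  have h2 : q.length + 1 = G'.dist r u := by
    have hlen : w.reverse.length = w.length := SimpleGraph.Walk.length_reverse w
    rw [hq] at hlen
    simp only [SimpleGraph.Walk.length_cons] at hlen
    omega
  have h3 : G'.dist r u ≤ G'.dist r x + 1 := by
    obtain ⟨w2, hw2⟩ := SimpleGraph.Reachable.exists_walk_length_eq_dist (⟨q.reverse⟩ : (restrict G S).Reachable r x)
    have := SimpleGraph.dist_le (w2.concat hadj.symm)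
    rwa [SimpleGraph.Walk.length_concat, hw2] at this
  omega

lemma kempe_count (hc : IsGrundy G c) {Δ m : ℕ} (hΔ : Δ = G.maxDegree) (hm : m ≠ Δ)
    {S : Set V} (hS : ∀ x, x ∈ S → c x = Δ ∨ c x = m) (r : V) :
    (Finset.univ.filter fun u => (restrict G S).Reachable r u ∧ c u = m).card ≤
      (Finset.univ.filter fun u => (restrict G S).Reachable r u ∧ c u = Δ).card + 1 := by
  classical
  set A := Finset.univ.filter (fun u => (restrict G S).Reachable r u ∧ c u = Δ) with hA
  set B := Finset.univ.filter (fun u => (restrict G S).Reachable r u ∧ c u = m) with hB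
  set ch : V → Finset V :=
    fun a => (G.neighborFinset a).filter (fun u => c u = m ∧ (restrict G S).dist r u = (restrict G S).dist r a + 1) with hch
  -- at most 2 m-colored neighbors of a Δ-colored vertex
  have hM : ∀ a : V, c a = Δ → ((G.neighborFinset a).filter fun u => c u = m).card ≤ 2 := by
    intro a ha
    have h1 := nbr_color_count hc a m
    have h2 : G.degree a ≤ Δ := hΔ ▸ G.degree_le_maxDegree a
    have h3 : (Finset.Icc 1 (c a - 1)).card = c a - 1 := by rw [Nat.card_Icc]; omega
    have h4 : (Finset.Icc 1 (c a - 1)).card - 1 ≤ ((Finset.Icc 1 (c a - 1)).erase m).card :=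
      Finset.pred_card_le_card_erase
    omega
  have hsub : B.erase r ⊆ A.biUnion ch := by
    intro b hb
    simp only [Finset.mem_erase, hB, Finset.mem_filter, Finset.mem_univ, true_and] at hb
    obtain ⟨hbr, hreach, hcb⟩ := hb
    obtain ⟨p, hpadj, hpre, hpd⟩ := parent_exists hreach hbr
    have hcp : c p = Δ := by
      rcases hS p hpadj.2.1 with h | h
      · exact h
      · exact absurd (h.trans hcb.symm) (grundy_proper hc hpadj.1)
    refine Finset.mem_biUnion.mpr ⟨p, ?_, ?_⟩
    · simp only [hA, Finset.mem_filter, Finset.mem_univ, true_and]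
      exact ⟨hpre, hcp⟩
    · simp only [hch, Finset.mem_filter, SimpleGraph.mem_neighborFinset]
      exact ⟨hpadj.1, hcb, hpd.symm⟩
  have hchcard : ∀ a ∈ A, (ch a).card ≤ if a = r then 2 else 1 := by
    intro a haA
    simp only [hA, Finset.mem_filter, Finset.mem_univ, true_and] at haA
    obtain ⟨hra, hca⟩ := haA
    have hsub2 : ch a ⊆ (G.neighborFinset a).filter fun u => c u = m := by
      intro u hu
      simp only [hch, Finset.mem_filter] at hu ⊢
      exact ⟨hu.1, hu.2.1⟩
    by_cases har : a = r
    · rw [if_pos har]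
      exact le_trans (Finset.card_le_card hsub2) (hM a hca)
    · obtain ⟨p, hpadj, hpre, hpd⟩ := parent_exists hra har
      have hcp : c p = m := by
        rcases hS p hpadj.2.1 with h | h
        · exact absurd (h.trans hca.symm) (grundy_proper hc hpadj.1)
        · exact h
      have hpmem : p ∈ (G.neighborFinset a).filter fun u => c u = m := by
        simp only [Finset.mem_filter, SimpleGraph.mem_neighborFinset]
        exact ⟨hpadj.1.symm, hcp⟩
      have hpnot : p ∉ ch a := by
        simp only [hch, Finset.mem_filter]
        rintro ⟨-, -, hdp⟩
        omega
      have hsub3 : ch a ⊆ ((G.neighborFinset a).filter fun u => c u = m).erase p := by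
        intro u hu
        exact Finset.mem_erase.mpr ⟨fun he => hpnot (he ▸ hu), hsub2 hu⟩
      rw [if_neg har]
      calc (ch a).card ≤ _ := Finset.card_le_card hsub3
        _ = ((G.neighborFinset a).filter fun u => c u = m).card - 1 :=
          Finset.card_erase_of_mem hpmem
        _ ≤ 1 := by have := hM a hca; omega
  have hBe : (B.erase r).card ≤ ∑ a ∈ A, (ch a).card :=
    le_trans (Finset.card_le_card hsub) (Finset.card_biUnion_le)
  by_cases hrB : r ∈ B
  · have hrA : ∀ a ∈ A, a ≠ r := by
      intro a haA he
      simp only [hA, Finset.mem_filter, Finset.mem_univ, true_and] at haA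
      simp only [hB, Finset.mem_filter, Finset.mem_univ, true_and] at hrB
      subst he
      exact hm (hrB.2 ▸ haA.2.symm ▸ rfl)
    have hsum' : ∑ a ∈ A, (ch a).card ≤ A.card := by
      calc ∑ a ∈ A, (ch a).card ≤ ∑ _a ∈ A, 1 := Finset.sum_le_sum (fun a ha => by
            have h := hchcard a ha
            rwa [if_neg (hrA a ha)] at h)
        _ = A.card := by simp
    have := Finset.card_erase_add_one hrB
    omega
  · have hsum : ∑ a ∈ A, (ch a).card ≤ A.card + 1 := by
      calc ∑ a ∈ A, (ch a).card ≤ ∑ a ∈ A, (1 + if a = r then 1 else 0) :=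
            Finset.sum_le_sum (fun a ha => by
              have h := hchcard a ha
              split at h <;> split <;> omega)
        _ = A.card + ∑ a ∈ A, (if a = r then 1 else 0) := by
            rw [Finset.sum_add_distrib]; simp
        _ ≤ A.card + 1 := by
            have : ∑ a ∈ A, (if a = r then 1 else 0) ≤ 1 := by
              rw [Finset.sum_ite_eq' A r (fun _ => 1)]
              split <;> omega
            omega
    rw [Finset.erase_eq_of_notMem hrB] at hBe
    omega


lemma card_filter_split (K : Set V) (P : V → Prop) :
    (Finset.univ.filter P).card =
      (Finset.univ.filter fun u => u ∈ K ∧ P u).card +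
      (Finset.univ.filter fun u => u ∉ K ∧ P u).card := by
  classical
  rw [← Finset.card_union_of_disjoint]
  · congr 1
    ext u
    simp only [Finset.mem_union, Finset.mem_filter, Finset.mem_univ, true_and]
    tauto
  · simp only [Finset.disjoint_left, Finset.mem_filter]
    tauto

lemma kempe_part (hc : IsGrundy G c) {Δ : ℕ} (hΔ : Δ = G.maxDegree) (v : V) (j : ℕ) :
    (Finset.univ.filter fun u => kempeSwap G c v j u = Δ).card ≤
      (Finset.univ.filter fun u => c u = Δ).card + 1 := by
  classical
  have hcol : ∀ u ∈ kempeSet G c v j, c u = c v ∨ c u = j := fun u hu =>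
    mem_of_reachable (S := {w | c w = c v ∨ c w = j}) hu (Or.inl rfl)
  by_cases hjv : j = c v
  · have hid : ∀ u, kempeSwap G c v j u = c u := by
      intro u
      simp only [kempeSwap]
      split_ifs <;> omega
    simp only [hid]
    exact Nat.le_succ _
  have hsplitL : (Finset.univ.filter fun u => kempeSwap G c v j u = Δ).card =
      (Finset.univ.filter fun u => u ∈ kempeSet G c v j ∧ kempeSwap G c v j u = Δ).card +
      (Finset.univ.filter fun u => u ∉ kempeSet G c v j ∧ kempeSwap G c v j u = Δ).card :=
    by
    rw [← Finset.card_union_of_disjoint]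
    · congr 1
      ext u
      simp only [Finset.mem_union, Finset.mem_filter, Finset.mem_univ, true_and]
      tauto
    · simp only [Finset.disjoint_left, Finset.mem_filter, Finset.mem_univ, true_and]
      tauto
  have hsplitR : (Finset.univ.filter fun u => c u = Δ).card =
      (Finset.univ.filter fun u => u ∈ kempeSet G c v j ∧ c u = Δ).card +
      (Finset.univ.filter fun u => u ∉ kempeSet G c v j ∧ c u = Δ).card :=
    by
    rw [← Finset.card_union_of_disjoint]
    · congr 1
      ext u
      simp only [Finset.mem_union, Finset.mem_filter, Finset.mem_univ, true_and]
      tauto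
    · simp only [Finset.disjoint_left, Finset.mem_filter, Finset.mem_univ, true_and]
      tauto
  have hout : (Finset.univ.filter fun u => u ∉ kempeSet G c v j ∧ kempeSwap G c v j u = Δ) =
      (Finset.univ.filter fun u => u ∉ kempeSet G c v j ∧ c u = Δ) := by
    apply Finset.filter_congr
    intro u _
    by_cases h : u ∈ kempeSet G c v j
    · simp [h]
    · simp only [kempeSwap, if_neg h]
  by_cases hΔv : Δ = c v
  · -- swapped color is Δ on the chain iff old color is j
    have hin : (Finset.univ.filter fun u => u ∈ kempeSet G c v j ∧ kempeSwap G c v j u = Δ) =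
        (Finset.univ.filter fun u => u ∈ kempeSet G c v j ∧ c u = j) := by
      apply Finset.filter_congr
      intro u _
      by_cases h : u ∈ kempeSet G c v j
      · simp only [h, true_and, kempeSwap, if_pos h]
        rcases hcol u h with h4 | h4 <;> split_ifs <;> omega
      · simp [h]
    have hcount := kempe_count (G := G) hc hΔ (m := j)
      (by omega) (S := {w | c w = c v ∨ c w = j})
      (fun x hx => hx.imp (fun h => by omega) id) v
    have e1 : (Finset.univ.filter fun u => u ∈ kempeSet G c v j ∧ c u = j) =
        (Finset.univ.filter fun u =>
          (restrict G {w | c w = c v ∨ c w = j}).Reachable v u ∧ c u = j) := by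
      apply Finset.filter_congr
      intro u _
      exact Iff.rfl
    have e2 : (Finset.univ.filter fun u => u ∈ kempeSet G c v j ∧ c u = Δ) =
        (Finset.univ.filter fun u =>
          (restrict G {w | c w = c v ∨ c w = j}).Reachable v u ∧ c u = Δ) := by
      apply Finset.filter_congr
      intro u _
      exact Iff.rfl
    have h5 : (Finset.univ.filter fun u => u ∈ kempeSet G c v j ∧ c u = j).card ≤
        (Finset.univ.filter fun u => u ∈ kempeSet G c v j ∧ c u = Δ).card + 1 := by
      rw [e1, e2]; exact hcount
    rw [hsplitL, hsplitR, hout, hin]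
    omega
  by_cases hΔj : Δ = j
  · have hin : (Finset.univ.filter fun u => u ∈ kempeSet G c v j ∧ kempeSwap G c v j u = Δ) =
        (Finset.univ.filter fun u => u ∈ kempeSet G c v j ∧ c u = c v) := by
      apply Finset.filter_congr
      intro u _
      by_cases h : u ∈ kempeSet G c v j
      · simp only [h, true_and, kempeSwap, if_pos h]
        rcases hcol u h with h4 | h4 <;> split_ifs <;> omega
      · simp [h]
    have hcount := kempe_count (G := G) hc hΔ (m := c v)
      (by omega) (S := {w | c w = c v ∨ c w = j})
      (fun x hx => hx.symm.imp (fun h => by omega) id) v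
    have e1 : (Finset.univ.filter fun u => u ∈ kempeSet G c v j ∧ c u = c v) =
        (Finset.univ.filter fun u =>
          (restrict G {w | c w = c v ∨ c w = j}).Reachable v u ∧ c u = c v) := by
      apply Finset.filter_congr
      intro u _
      exact Iff.rfl
    have e2 : (Finset.univ.filter fun u => u ∈ kempeSet G c v j ∧ c u = Δ) =
        (Finset.univ.filter fun u =>
          (restrict G {w | c w = c v ∨ c w = j}).Reachable v u ∧ c u = Δ) := by
      apply Finset.filter_congr
      intro u _
      exact Iff.rfl
    have h5 : (Finset.univ.filter fun u => u ∈ kempeSet G c v j ∧ c u = c v).card ≤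
        (Finset.univ.filter fun u => u ∈ kempeSet G c v j ∧ c u = Δ).card + 1 := by
      rw [e1, e2]; exact hcount
    rw [hsplitL, hsplitR, hout, hin]
    omega
  · have hin : (Finset.univ.filter fun u => u ∈ kempeSet G c v j ∧ kempeSwap G c v j u = Δ) =
        ∅ := by
      rw [Finset.filter_eq_empty_iff]
      rintro u - ⟨h, h2⟩
      simp only [kempeSwap, if_pos h] at h2
      rcases hcol u h with h4 | h4 <;> split_ifs at h2 <;> omega
    rw [hsplitL, hsplitR, hout, hin]
    simp only [Finset.card_empty]
    omega

lemma ce_part (hc : IsGrundy G c) {Δ : ℕ} (hΔ : Δ = G.maxDegree) (v : V) (i j : ℕ)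
    (h3 : 3 ≤ c v) (hij : i ≠ j) (hi1 : 1 ≤ i) (hi2 : i ≤ c v - 1)
    (hj1 : 1 ≤ j) (hj2 : j ≤ c v - 1) :
    (Finset.univ.filter fun u => ceSwap G c v i j u = Δ).card ≤
      (Finset.univ.filter fun u => c u = Δ).card + 1 := by
  classical
  have hcol : ∀ u ∈ ceSet G c v i j, c u = i ∨ c u = j := by
    rintro u ⟨w, hadj, hcw, hre⟩
    exact mem_of_reachable (S := {x | c x = i ∨ c x = j}) hre (Or.inl hcw)
  have hsplitL : (Finset.univ.filter fun u => ceSwap G c v i j u = Δ).card =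
      (Finset.univ.filter fun u => u ∈ ceSet G c v i j ∧ ceSwap G c v i j u = Δ).card +
      (Finset.univ.filter fun u => u ∉ ceSet G c v i j ∧ ceSwap G c v i j u = Δ).card :=
    by
    rw [← Finset.card_union_of_disjoint]
    · congr 1
      ext u
      simp only [Finset.mem_union, Finset.mem_filter, Finset.mem_univ, true_and]
      tauto
    · simp only [Finset.disjoint_left, Finset.mem_filter, Finset.mem_univ, true_and]
      tauto
  have hsplitR : (Finset.univ.filter fun u => c u = Δ).card =
      (Finset.univ.filter fun u => u ∈ ceSet G c v i j ∧ c u = Δ).card +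
      (Finset.univ.filter fun u => u ∉ ceSet G c v i j ∧ c u = Δ).card :=
    by
    rw [← Finset.card_union_of_disjoint]
    · congr 1
      ext u
      simp only [Finset.mem_union, Finset.mem_filter, Finset.mem_univ, true_and]
      tauto
    · simp only [Finset.disjoint_left, Finset.mem_filter, Finset.mem_univ, true_and]
      tauto
  have hout : (Finset.univ.filter fun u => u ∉ ceSet G c v i j ∧ ceSwap G c v i j u = Δ) =
      (Finset.univ.filter fun u => u ∉ ceSet G c v i j ∧ c u = Δ) := by
    apply Finset.filter_congr
    intro u _
    by_cases h : u ∈ ceSet G c v i j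
    · simp [h]
    · simp only [ceSwap, if_neg h]
  by_cases hΔij : Δ = i ∨ Δ = j
  · -- here c v = Δ + 1 and v has a unique i-colored neighbor
    have hΔle : Δ ≤ c v - 1 := by rcases hΔij with h | h <;> omega
    have hdeg1 : c v - 1 ≤ G.degree v := by
      have h1 := nbr_color_count hc v 0
      have h2 : ((Finset.Icc 1 (c v - 1)).erase 0) = Finset.Icc 1 (c v - 1) :=
        Finset.erase_eq_of_notMem (by simp)
      rw [h2, Nat.card_Icc] at h1
      omega
    have hdeg2 : G.degree v ≤ Δ := hΔ ▸ G.degree_le_maxDegree v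
    have hT : ((G.neighborFinset v).filter fun u => c u = i).card ≤ 1 := by
      have h1 := nbr_color_count hc v i
      have h2 : ((Finset.Icc 1 (c v - 1)).erase i).card = (c v - 1) - 1 := by
        rw [Finset.card_erase_of_mem (Finset.mem_Icc.mpr ⟨hi1, hi2⟩), Nat.card_Icc]
        omega
      omega
    by_cases hTne : ((G.neighborFinset v).filter fun u => c u = i).Nonempty
    · obtain ⟨w₀, hw₀⟩ := hTne
      have huniq : ∀ w, G.Adj v w → c w = i → w = w₀ := by
        intro w hw hcw
        exact Finset.card_le_one.mp hT w
          (Finset.mem_filter.mpr ⟨by simpa using hw, hcw⟩) w₀ hw₀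
      simp only [Finset.mem_filter, SimpleGraph.mem_neighborFinset] at hw₀
      have hUiff : ∀ u, u ∈ ceSet G c v i j ↔
          (restrict G {x | c x = i ∨ c x = j}).Reachable w₀ u := by
        intro u
        constructor
        · rintro ⟨w, hadj, hcw, hre⟩
          rwa [huniq w hadj hcw] at hre
        · intro hre
          exact ⟨w₀, hw₀.1, hw₀.2, hre⟩
      rcases hΔij with hΔi | hΔj
      · have hin : (Finset.univ.filter fun u =>
              u ∈ ceSet G c v i j ∧ ceSwap G c v i j u = Δ) =
            (Finset.univ.filter fun u => u ∈ ceSet G c v i j ∧ c u = j) := by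
          apply Finset.filter_congr
          intro u _
          by_cases h : u ∈ ceSet G c v i j
          · simp only [h, true_and, ceSwap, if_pos h]
            rcases hcol u h with h4 | h4 <;> split_ifs <;> omega
          · simp [h]
        have hcount := kempe_count (G := G) hc hΔ (m := j)
          (by omega) (S := {x | c x = i ∨ c x = j})
          (fun x hx => hx.imp (fun h => by omega) id) w₀
        have e1 : (Finset.univ.filter fun u => u ∈ ceSet G c v i j ∧ c u = j) =
            (Finset.univ.filter fun u =>
              (restrict G {x | c x = i ∨ c x = j}).Reachable w₀ u ∧ c u = j) := by
          apply Finset.filter_congr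
          intro u _
          exact and_congr_left' (hUiff u)
        have e2 : (Finset.univ.filter fun u => u ∈ ceSet G c v i j ∧ c u = Δ) =
            (Finset.univ.filter fun u =>
              (restrict G {x | c x = i ∨ c x = j}).Reachable w₀ u ∧ c u = Δ) := by
          apply Finset.filter_congr
          intro u _
          exact and_congr_left' (hUiff u)
        have h5 : (Finset.univ.filter fun u => u ∈ ceSet G c v i j ∧ c u = j).card ≤
            (Finset.univ.filter fun u => u ∈ ceSet G c v i j ∧ c u = Δ).card + 1 := by
          rw [e1, e2]; exact hcount
        rw [hsplitL, hsplitR, hout, hin]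
        omega
      · have hin : (Finset.univ.filter fun u =>
              u ∈ ceSet G c v i j ∧ ceSwap G c v i j u = Δ) =
            (Finset.univ.filter fun u => u ∈ ceSet G c v i j ∧ c u = i) := by
          apply Finset.filter_congr
          intro u _
          by_cases h : u ∈ ceSet G c v i j
          · simp only [h, true_and, ceSwap, if_pos h]
            rcases hcol u h with h4 | h4 <;> split_ifs <;> omega
          · simp [h]
        have hcount := kempe_count (G := G) hc hΔ (m := i)
          (by omega) (S := {x | c x = i ∨ c x = j})
          (fun x hx => hx.symm.imp (fun h => by omega) id) w₀
        have e1 : (Finset.univ.filter fun u => u ∈ ceSet G c v i j ∧ c u = i) =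
            (Finset.univ.filter fun u =>
              (restrict G {x | c x = i ∨ c x = j}).Reachable w₀ u ∧ c u = i) := by
          apply Finset.filter_congr
          intro u _
          exact and_congr_left' (hUiff u)
        have e2 : (Finset.univ.filter fun u => u ∈ ceSet G c v i j ∧ c u = Δ) =
            (Finset.univ.filter fun u =>
              (restrict G {x | c x = i ∨ c x = j}).Reachable w₀ u ∧ c u = Δ) := by
          apply Finset.filter_congr
          intro u _
          exact and_congr_left' (hUiff u)
        have h5 : (Finset.univ.filter fun u => u ∈ ceSet G c v i j ∧ c u = i).card ≤
            (Finset.univ.filter fun u => u ∈ ceSet G c v i j ∧ c u = Δ).card + 1 := by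
          rw [e1, e2]; exact hcount
        rw [hsplitL, hsplitR, hout, hin]
        omega
    · -- no i-colored neighbor: the ceSet is empty
      have hU : ∀ u, u ∉ ceSet G c v i j := by
        rintro u ⟨w, hadj, hcw, -⟩
        exact hTne ⟨w, Finset.mem_filter.mpr ⟨by simpa using hadj, hcw⟩⟩
      have hin : (Finset.univ.filter fun u =>
          u ∈ ceSet G c v i j ∧ ceSwap G c v i j u = Δ) = ∅ := by
        rw [Finset.filter_eq_empty_iff]
        rintro u - ⟨h, -⟩
        exact hU u h
      rw [hsplitL, hsplitR, hout, hin]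
      simp only [Finset.card_empty]
      omega
  · push_neg at hΔij
    have hin : (Finset.univ.filter fun u =>
        u ∈ ceSet G c v i j ∧ ceSwap G c v i j u = Δ) = ∅ := by
      rw [Finset.filter_eq_empty_iff]
      rintro u - ⟨h, h2⟩
      simp only [ceSwap, if_pos h] at h2
      rcases hcol u h with h4 | h4 <;> split_ifs at h2 <;> omega
    rw [hsplitL, hsplitR, hout, hin]
    simp only [Finset.card_empty]
    omega

end Stmt4Aux

/-- Let `G` be a finite simple graph with maximum degree `Δ` and let `c` be
a Grundy coloring of `G`. Then every Kempe chain operation `(v, j)` and every color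
elimination (at a vertex `v` with `c v ≥ 3`, with distinct colors `i, j ∈ {1, …, c v − 1}`)
can only increase the number of `Δ`-colored vertices by at most `1`. -/
theorem stmt4 {V : Type*} [Fintype V] [DecidableEq V] (G : SimpleGraph V)
    (Δ : ℕ) (hΔ : Δ = G.maxDegree) (c : V → ℕ) (hc : IsGrundy G c) :
    (∀ (v : V) (j : ℕ),
      (Finset.univ.filter fun u => kempeSwap G c v j u = Δ).card ≤
        (Finset.univ.filter fun u => c u = Δ).card + 1) ∧
    (∀ (v : V) (i j : ℕ), 3 ≤ c v → i ≠ j →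
      1 ≤ i → i ≤ c v - 1 → 1 ≤ j → j ≤ c v - 1 →
      (Finset.univ.filter fun u => ceSwap G c v i j u = Δ).card ≤
        (Finset.univ.filter fun u => c u = Δ).card + 1) := by
  exact ⟨fun v j => kempe_part hc hΔ v j,
    fun v i j h3 hij hi1 hi2 hj1 hj2 => ce_part hc hΔ v i j h3 hij hi1 hi2 hj1 hj2⟩
end DGC
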